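/- Let G be a finite simple graph with vertex set V = {1,…,n}, edge set E, and stability number α(G), let r ≥ 1, and let A, (Q_i), (Q_{ij}) be a reduced Nullstellensatz certificate 1 = A·(−(α(G)+r) + Σ_{i=1}^n x_i) + Σ_{i∈V} Q_i·(x_i² − x_i) + Σ_{{i,j}∈E} Q_{ij}·x_i·x_j (every monomial of A is square-free with support a stable set of G). Then for every stable set S of G, the monomial ∏_{v∈S} x_v appears in A with a non-zero coefficient; in particular, A has at least as many monomials with non-zero coefficients as G has stable sets. -/

import Mathlib

/-!
Evaluating the certificate at the 0/1 indicator vector `χ_T` of a stable set `T` kills every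
`Q`-term, leaving `A(χ_T) (|T| - α - r) = 1`, and `|T| ≤ α < α + r`.
Since `A` is multilinear, `A(χ_T) = ∑_{U ⊆ T} c_U`, where `c_U` is the coefficient of
`∏_{v ∈ U} x_v`, so Möbius inversion on the Boolean lattice gives
`c_S = ∑_{T ⊆ S} (-1)^{|S| - |T|} / (|T| - α - r)`.
This is the `s`-th forward difference of `t ↦ 1 / (t - α - r)` at `0`, `s = |S|`, which equals
`(-1)^s s! / ∏_{j=0}^{s} (j - α - r) ≠ 0`.
Distinct stable sets give distinct monomials, whence the count.
-/

open Finset MvPolynomial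

/-- The edge set of `G`, as ordered pairs `(i, j)` with `i < j`. -/
def edgePairs {n : ℕ} (G : SimpleGraph (Fin n)) [DecidableRel G.Adj] :
    Finset (Fin n × Fin n) :=
  Finset.univ.filter fun p => p.1 < p.2 ∧ G.Adj p.1 p.2

/-- A finset of vertices is stable (independent) if no two of its members are adjacent. -/
def IsStableSet {n : ℕ} (G : SimpleGraph (Fin n)) (S : Finset (Fin n)) : Prop :=
  ∀ i ∈ S, ∀ j ∈ S, ¬ G.Adj i j

/-- The stability number `α(G)`: the maximum size of a stable set of `G`. -/
def stabilityNumber {n : ℕ} (G : SimpleGraph (Fin n)) [DecidableRel G.Adj] : ℕ :=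
  (Finset.univ.powerset.filter fun S => ∀ i ∈ S, ∀ j ∈ S, ¬ G.Adj i j).sup Finset.card

/-- The Nullstellensatz certificate identity
`1 = A(−(α(G)+r) + Σ x_i) + Σ_i Q_i (x_i² − x_i) + Σ_{{i,j}∈E} Q_{ij} x_i x_j`
for the non-existence of a stable set of size `α(G) + r`. -/
def IsStableCert {n : ℕ} (G : SimpleGraph (Fin n)) [DecidableRel G.Adj] (r : ℕ)
    (A : MvPolynomial (Fin n) ℂ) (Q : Fin n → MvPolynomial (Fin n) ℂ)
    (Qe : Fin n × Fin n → MvPolynomial (Fin n) ℂ) : Prop :=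
  (1 : MvPolynomial (Fin n) ℂ) =
    A * ((∑ i : Fin n, X i) - C ((stabilityNumber G + r : ℕ) : ℂ)) +
    (∑ i : Fin n, Q i * (X i ^ 2 - X i)) +
    ∑ p ∈ edgePairs G, Qe p * (X p.1 * X p.2)

/-- The degree of a certificate: `max{deg A, deg Q_i, deg Q_{ij}}` (total degrees). -/
def stableCertDeg {n : ℕ} (G : SimpleGraph (Fin n)) [DecidableRel G.Adj]
    (A : MvPolynomial (Fin n) ℂ) (Q : Fin n → MvPolynomial (Fin n) ℂ)
    (Qe : Fin n × Fin n → MvPolynomial (Fin n) ℂ) : ℕ :=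
  max A.totalDegree
    (max (Finset.univ.sup fun i => (Q i).totalDegree)
      ((edgePairs G).sup fun p => (Qe p).totalDegree))

/-- A certificate is reduced when every monomial of `A` is square-free and its support
is a stable set of `G`. -/
def IsReducedCoeff {n : ℕ} (G : SimpleGraph (Fin n)) (A : MvPolynomial (Fin n) ℂ) : Prop :=
  ∀ m ∈ A.support, (∀ i : Fin n, m i ≤ 1) ∧ IsStableSet G m.support

/-- The square-free exponent vector `∏_{v ∈ S} x_v` associated with a finset `S`. -/
noncomputable def expOf {n : ℕ} (S : Finset (Fin n)) : Fin n →₀ ℕ :=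
  ∑ v ∈ S, Finsupp.single v 1

section ForwardDifference
open fwdDiff
variable {K : Type*} [Field K]

theorem fwdDiff_iter_inv (s : ℕ) {x : K} (hx : (ascPochhammer K (s + 1)).eval x ≠ 0) :
    Δ_[1] ^[s] (fun t : K ↦ t⁻¹) x =
      (-1) ^ s * s.factorial / (ascPochhammer K (s + 1)).eval x := by
  induction s generalizing x with
  | zero => simp
  | succ s ih =>
    set M := (ascPochhammer K s).eval (x + 1)
    have hx1 : (ascPochhammer K (s + 1)).eval (x + 1) = M * (x + 1 + s) :=
      ascPochhammer_succ_eval s (x + 1)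
    have hx0 : (ascPochhammer K (s + 1)).eval x = x * M := by
      simp [ascPochhammer_succ_left, M, Polynomial.eval_comp]
    have hx2 : (ascPochhammer K (s + 2)).eval x = x * (M * (x + 1 + s)) := by
      rw [← hx1]; simp [ascPochhammer_succ_left _ (s + 1), Polynomial.eval_comp]
    rw [hx2] at hx ⊢
    obtain ⟨hx, hMs⟩ := mul_ne_zero_iff.1 hx
    obtain ⟨hM, hs⟩ := mul_ne_zero_iff.1 hMs
    rw [Function.iterate_succ_apply', fwdDiff, ih (by rw [hx1]; exact mul_ne_zero hM hs),
      ih (by rw [hx0]; exact mul_ne_zero hx hM), hx1, hx0, Nat.factorial_succ]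
    field_simp
    push_cast
    ring

theorem sum_range_neg_one_pow_mul_choose_smul_inv (s : ℕ) {x : K}
    (hx : (ascPochhammer K (s + 1)).eval x ≠ 0) :
    ∑ k ∈ range (s + 1), ((-1 : ℤ) ^ (s - k) * s.choose k) • ((k : K) + x)⁻¹ =
      (-1) ^ s * s.factorial / (ascPochhammer K (s + 1)).eval x := by
  have := fwdDiff_iter_comp_add 1 (fun t : K ↦ t⁻¹) x s 0
  rw [zero_add, fwdDiff_iter_inv s hx, fwdDiff_iter_eq_sum_shift] at this
  simpa only [zero_add, nsmul_one] using this

theorem sum_powerset_neg_one_pow_smul_inv_card_sub_ne_zero [CharZero K] {α : Type*}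
    {S : Finset α} {a : ℕ} (h : #S < a) :
    ∑ T ∈ S.powerset, (-1 : ℤ) ^ (#S - #T) • ((#T : K) - a)⁻¹ ≠ 0 := by
  have hP : (ascPochhammer K (#S + 1)).eval (-(a : K)) ≠ 0 := by
    rw [Ne, ascPochhammer_eval_eq_zero_iff]
    rintro ⟨k, hk, hka⟩
    rw [neg_neg, Nat.cast_inj] at hka
    omega
  rw [sum_powerset_apply_card (fun k ↦ (-1 : ℤ) ^ (#S - k) • ((k : K) - a)⁻¹)]
  simp only [← Nat.cast_smul_eq_nsmul ℤ, smul_smul, sub_eq_add_neg,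
    mul_comm ((Nat.choose _ _ : ℕ) : ℤ)]
  rw [sum_range_neg_one_pow_mul_choose_smul_inv _ hP]
  exact div_ne_zero (mul_ne_zero (pow_ne_zero _ (by norm_num))
    (by exact_mod_cast (#S).factorial_ne_zero)) hP

end ForwardDifference

section Moebius
variable {α M : Type*} [DecidableEq α] [AddCommGroup M]

theorem sum_Icc_neg_one_pow_card_sub {U S : Finset α} (hUS : U ⊆ S) :
    ∑ T ∈ Icc U S, (-1 : ℤ) ^ (#S - #T) = if U = S then 1 else 0 := by
  rw [Icc_eq_image_powerset hUS, sum_image]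
  · have hcard : ∀ V ∈ (S \ U).powerset, #S - #(U ∪ V) = #(S \ U) - #V := by
      intro V hV
      rw [mem_powerset, subset_sdiff] at hV
      rw [card_union_of_disjoint hV.2.symm, card_sdiff_of_subset hUS]
      omega
    rw [sum_congr rfl fun V hV ↦ by rw [hcard V hV], sum_powerset_apply_card
      (fun k ↦ (-1 : ℤ) ^ (#(S \ U) - k))]
    have := (add_pow (1 : ℤ) (-1) #(S \ U)).symm
    simp only [one_pow, one_mul, add_neg_cancel] at this
    simp only [nsmul_eq_mul, mul_comm ((Nat.choose _ _ : ℕ) : ℤ), this, zero_pow_eq]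
    simp only [card_eq_zero, sdiff_eq_empty_iff_subset]
    simp only [Subset.antisymm_iff, hUS, true_and]
  · intro V hV W hW hVW
    rw [mem_coe, mem_powerset, subset_sdiff] at hV hW
    rw [← union_sdiff_cancel_left hV.2.symm, show U ∪ V = U ∪ W from hVW,
      union_sdiff_cancel_left hW.2.symm]

theorem sum_powerset_neg_one_pow_smul_sum_powerset (f : Finset α → M) (S : Finset α) :
    ∑ T ∈ S.powerset, (-1 : ℤ) ^ (#S - #T) • ∑ U ∈ T.powerset, f U = f S := by
  calc ∑ T ∈ S.powerset, (-1 : ℤ) ^ (#S - #T) • ∑ U ∈ T.powerset, f U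
      = ∑ U ∈ S.powerset, ∑ T ∈ Icc U S, (-1 : ℤ) ^ (#S - #T) • f U := by
        simp_rw [smul_sum]
        refine sum_comm' fun T U ↦ ?_
        simp only [mem_powerset, mem_Icc]
        constructor
        · rintro ⟨hTS, hUT⟩; exact ⟨⟨hUT, hTS⟩, hUT.trans hTS⟩
        · rintro ⟨⟨hUT, hTS⟩, -⟩; exact ⟨hTS, hUT⟩
    _ = ∑ U ∈ S.powerset, if U = S then f U else 0 := by
        refine sum_congr rfl fun U hU ↦ ?_
        rw [← sum_smul, sum_Icc_neg_one_pow_card_sub (mem_powerset.1 hU)]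
        split_ifs <;> simp
    _ = f S := by simp

end Moebius

section Multilinear
variable {R : Type*} {n : ℕ}

theorem expOf_apply (S : Finset (Fin n)) (i : Fin n) : expOf S i = if i ∈ S then 1 else 0 := by
  simp [expOf, Finsupp.finsetSum_apply, Finsupp.single_apply]

theorem support_expOf (S : Finset (Fin n)) : (expOf S).support = S := by
  ext i
  simp [expOf_apply]

theorem expOf_injective : Function.Injective (expOf (n := n)) := fun S T h ↦ by
  rw [← support_expOf S, h, support_expOf]

theorem expOf_support_of_le_one {m : Fin n →₀ ℕ} (hm : ∀ i, m i ≤ 1) :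
    expOf m.support = m := by
  ext i
  have := hm i
  by_cases hi : m i = 0
  · simp [expOf_apply, hi]
  · simp [expOf_apply, hi]
    omega

theorem prod_indicator_pow [CommSemiring R] {σ : Type*} [DecidableEq σ] (T : Finset σ)
    (m : σ →₀ ℕ) :
    ∏ i ∈ m.support, ((T : Set σ).indicator 1 i : R) ^ m i =
      if m.support ⊆ T then 1 else 0 := by
  split_ifs with hmT
  · exact prod_eq_one fun i hi ↦ by simp [hmT hi]
  · obtain ⟨i, hi, hiT⟩ := not_subset.1 hmT
    exact prod_eq_zero hi (by simp [hiT, Finsupp.mem_support_iff.1 hi])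

theorem eval_indicator_eq_sum_powerset_coeff [CommSemiring R] {A : MvPolynomial (Fin n) R}
    (hA : ∀ m ∈ A.support, ∀ i, m i ≤ 1) (T : Finset (Fin n)) :
    eval ((T : Set (Fin n)).indicator 1) A = ∑ U ∈ T.powerset, coeff (expOf U) A := by
  simp only [eval_eq, prod_indicator_pow, mul_ite, mul_one, mul_zero]
  symm
  refine sum_bij_ne_zero (fun U _ _ ↦ expOf U) (fun U _ hU ↦ mem_support_iff.2 hU)
    (fun U _ _ V _ _ h ↦ expOf_injective h) (fun m hm hmT ↦ ?_) (fun U hU _ ↦ ?_)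
  · refine ⟨m.support, ?_, ?_, expOf_support_of_le_one (hA m hm)⟩
    · exact mem_powerset.2 (of_not_not fun h ↦ hmT (if_neg h))
    · rw [expOf_support_of_le_one (hA m hm)]
      exact mem_support_iff.1 hm
  · rw [support_expOf, if_pos (mem_powerset.1 hU)]

theorem coeff_expOf_eq_sum_powerset_eval [CommRing R] {A : MvPolynomial (Fin n) R}
    (hA : ∀ m ∈ A.support, ∀ i, m i ≤ 1) (S : Finset (Fin n)) :
    coeff (expOf S) A =
      ∑ T ∈ S.powerset, (-1 : ℤ) ^ (#S - #T) • eval ((T : Set (Fin n)).indicator 1) A := by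
  simp only [eval_indicator_eq_sum_powerset_coeff hA]
  exact (sum_powerset_neg_one_pow_smul_sum_powerset (fun U ↦ coeff (expOf U) A) S).symm

end Multilinear

section StableSet
variable {n : ℕ} {G : SimpleGraph (Fin n)}

theorem IsStableSet.subset {S T : Finset (Fin n)} (hS : IsStableSet G S) (hTS : T ⊆ S) :
    IsStableSet G T :=
  fun i hi j hj ↦ hS i (hTS hi) j (hTS hj)

theorem IsStableSet.card_le_stabilityNumber [DecidableRel G.Adj] {S : Finset (Fin n)}
    (hS : IsStableSet G S) : #S ≤ stabilityNumber G :=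
  le_sup (f := card) (mem_filter.2 ⟨mem_powerset.2 (subset_univ S), hS⟩)

theorem IsStableCert.eval_indicator_mul_card_sub [DecidableRel G.Adj] {r : ℕ}
    {A : MvPolynomial (Fin n) ℂ} {Q : Fin n → MvPolynomial (Fin n) ℂ}
    {Qe : Fin n × Fin n → MvPolynomial (Fin n) ℂ} (hcert : IsStableCert G r A Q Qe)
    {T : Finset (Fin n)} (hT : IsStableSet G T) :
    eval ((T : Set (Fin n)).indicator 1) A * (#T - (stabilityNumber G + r : ℕ)) = 1 := by
  have h := congrArg (eval ((T : Set (Fin n)).indicator 1)) hcert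
  have hsum : ∑ i, (T : Set (Fin n)).indicator (1 : Fin n → ℂ) i = #T := by
    simp [Set.indicator_apply]
  have hsq : ∀ i, (T : Set (Fin n)).indicator (1 : Fin n → ℂ) i ^ 2 -
      (T : Set (Fin n)).indicator 1 i = 0 := by
    intro i
    by_cases hi : i ∈ T <;> simp [hi]
  have hedge : ∀ p ∈ edgePairs G, (T : Set (Fin n)).indicator (1 : Fin n → ℂ) p.1 *
      (T : Set (Fin n)).indicator 1 p.2 = 0 := by
    intro p hp
    have hadj := (mem_filter.1 hp).2.2
    by_cases h1 : p.1 ∈ T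
    · have h2 : p.2 ∉ T := fun h2 ↦ hT p.1 h1 p.2 h2 hadj
      simp [h2]
    · simp [h1]
  simp only [map_one, map_add, map_mul, map_sub, map_sum, map_pow, eval_X, eval_C, hsum, hsq,
    mul_zero, sum_const_zero, add_zero] at h
  rw [sum_eq_zero fun p hp ↦ by rw [hedge p hp, mul_zero], add_zero] at h
  exact h.symm

end StableSet

/-- In a reduced Nullstellensatz certificate for the non-existence of a
stable set of size `α(G) + r`, the monomial `∏_{v ∈ S} x_v` appears in `A` with non-zero
coefficient for every stable set `S` of `G`; in particular `A` has at least as many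
monomials with non-zero coefficients as `G` has stable sets. -/
theorem reduced_certificate_contains_all_stable_sets (n : ℕ) (G : SimpleGraph (Fin n))
    [DecidableRel G.Adj] (r : ℕ) (hr : 1 ≤ r)
    (A : MvPolynomial (Fin n) ℂ) (Q : Fin n → MvPolynomial (Fin n) ℂ)
    (Qe : Fin n × Fin n → MvPolynomial (Fin n) ℂ)
    (hcert : IsStableCert G r A Q Qe) (hred : IsReducedCoeff G A) :
    (∀ S : Finset (Fin n), IsStableSet G S → MvPolynomial.coeff (expOf S) A ≠ 0) ∧
    (Finset.univ.powerset.filter fun S : Finset (Fin n) =>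
        ∀ i ∈ S, ∀ j ∈ S, ¬ G.Adj i j).card ≤ A.support.card := by
  have hcoeff (S : Finset (Fin n)) (hS : IsStableSet G S) : coeff (expOf S) A ≠ 0 := by
    have hlt : #S < stabilityNumber G + r := by
      have := hS.card_le_stabilityNumber
      omega
    have heval : ∀ T ∈ S.powerset, eval ((T : Set (Fin n)).indicator 1) A =
        ((#T : ℂ) - (stabilityNumber G + r : ℕ))⁻¹ := fun T hT ↦
      eq_inv_of_mul_eq_one_left (hcert.eval_indicator_mul_card_sub (hS.subset (mem_powerset.1 hT)))
    rw [coeff_expOf_eq_sum_powerset_eval (fun m hm ↦ (hred m hm).1),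
      sum_congr rfl fun T hT ↦ by rw [heval T hT]]
    exact sum_powerset_neg_one_pow_smul_inv_card_sub_ne_zero hlt
  refine ⟨hcoeff, card_le_card_of_injOn expOf (fun S hS ↦ ?_) expOf_injective.injOn⟩
  exact mem_support_iff.2 (hcoeff S (mem_filter.1 hS).2)
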